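/- Let m, n ≥ 1, 1 ≤ i ≤ m, 1 ≤ j ≤ n, and let α = cg(i,j) be the join-congruence of the grid K_{m,n} generated by the pairs ((i,j−1),(i,j)) and ((i−1,j),(i,j)). Then for distinct elements a, b of K_{m,n}, the pair (a,b) belongs to α if and only if one of the following holds: (1) both a and b lie in {(i,j−1), (i−1,j), (i,j)}; (2) there is s with i < s ≤ m such that {a,b} = {(s,j−1), (s,j)}; (3) there is t with j < t ≤ n such that {a,b} = {(i−1,t), (i,t)}. In particular, the α-class of (i,j) is {(i,j−1), (i−1,j), (i,j)}, the sets in (2) and (3) are the two-element α-classes, and all other α-classes are singletons. -/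

import Mathlib

open Fin.NatCast

/-- The grid `K_{m,n}`: the lattice `{0,…,m} × {0,…,n}` ordered componentwise
(join and meet are componentwise max and min). -/
abbrev Grid (m n : ℕ) := Fin (m + 1) × Fin (n + 1)

/-- A join-congruence of a join-semilattice: an equivalence relation compatible with
joining a fixed element. -/
def IsJoinCong {α : Type*} [SemilatticeSup α] (r : α → α → Prop) : Prop :=
  Equivalence r ∧ ∀ a b c : α, r a b → r (a ⊔ c) (b ⊔ c)

/-- The join-congruence generated by a relation `R`: the smallest join-congruence
containing `R` (the intersection of all join-congruences containing `R`). -/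
def joinCongGen {α : Type*} [SemilatticeSup α] (R : α → α → Prop) : α → α → Prop :=
  fun a b => ∀ r : α → α → Prop, IsJoinCong r → (∀ x y, R x y → r x y) → r a b

/-- The join of a family of join-congruences: the smallest join-congruence containing
all members of the family. -/
def joinCongSup {α : Type*} [SemilatticeSup α] {ι : Sort*} (f : ι → α → α → Prop) :
    α → α → Prop :=
  joinCongGen fun a b => ∃ i, f i a b

/-- For `1 ≤ i ≤ m` and `1 ≤ j ≤ n`, the join-congruence `cg(i,j)` of the grid `K_{m,n}`
generated by the pairs `((i,j−1),(i,j))` and `((i−1,j),(i,j))`. -/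
def cg (m n i j : ℕ) : Grid m n → Grid m n → Prop :=
  joinCongGen fun a b =>
    b = ((i : Fin (m + 1)), (j : Fin (n + 1))) ∧
      (a = ((i : Fin (m + 1)), ((j - 1 : ℕ) : Fin (n + 1))) ∨
        a = (((i - 1 : ℕ) : Fin (m + 1)), (j : Fin (n + 1))))

/-! If every generating pair of a join-congruence has the form `(a, u)` with `a ≤ u` for one
fixed `u`, the congruence is explicit: `x ≡ y` iff `x = y`, or both lie above some generator `a`
and `x ⊔ u = y ⊔ u`. This relation is a join-congruence containing the generators, and
conversely joining the generator `(a, u)` with any `x ≥ a` gives `x ≡ x ⊔ u`. For `cg(i,j)`,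
with `u = (i,j)` and generators `(i,j−1)`, `(i−1,j)`, the relation read off in coordinates is
the stated one: `x ⊔ u = y ⊔ u` with `x ≠ y` forces the two points into the corner triple, into
one column `s > i` at heights `j−1, j`, or into one row `t > j` at abscissae `i−1, i`. -/

section JoinCongGen

variable {α : Type*} [SemilatticeSup α]

lemma isJoinCong_joinCongGen (R : α → α → Prop) : IsJoinCong (joinCongGen R) :=
  ⟨⟨fun a _ hr _ => hr.1.refl a,
    fun h r hr hR => hr.1.symm (h r hr hR),
    fun h₁ h₂ r hr hR => hr.1.trans (h₁ r hr hR) (h₂ r hr hR)⟩,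
    fun a b c h r hr hR => hr.2 a b c (h r hr hR)⟩

lemma joinCongGen_of_rel {R : α → α → Prop} {a b : α} (h : R a b) : joinCongGen R a b :=
  fun _ _ hR => hR _ _ h

def absorbRel (u : α) (A : Set α) (x y : α) : Prop :=
  x = y ∨ (x ∈ upperClosure A ∧ y ∈ upperClosure A ∧ x ⊔ u = y ⊔ u)

lemma isJoinCong_absorbRel (u : α) (A : Set α) : IsJoinCong (absorbRel u A) := by
  refine ⟨⟨fun x => Or.inl rfl, ?_, ?_⟩, ?_⟩
  · rintro x y (rfl | ⟨hx, hy, hxy⟩)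
    exacts [Or.inl rfl, Or.inr ⟨hy, hx, hxy.symm⟩]
  · rintro x y z (rfl | ⟨hx, hy, hxy⟩) (rfl | ⟨hy', hz, hyz⟩)
    exacts [Or.inl rfl, Or.inr ⟨hy', hz, hyz⟩, Or.inr ⟨hx, hy, hxy⟩,
      Or.inr ⟨hx, hz, hxy.trans hyz⟩]
  · rintro x y c (rfl | ⟨hx, hy, hxy⟩)
    · exact Or.inl rfl
    · refine Or.inr ⟨(upperClosure A).upper le_sup_left hx,
        (upperClosure A).upper le_sup_left hy, ?_⟩
      rw [sup_right_comm, hxy, sup_right_comm]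

theorem joinCongGen_eq_absorbRel {u : α} {A : Set α} (hA : ∀ a ∈ A, a ≤ u) :
    joinCongGen (fun x y => y = u ∧ x ∈ A) = absorbRel u A := by
  ext x y
  have hgen := isJoinCong_joinCongGen (fun x y => y = u ∧ x ∈ A)
  have to_sup : ∀ x ∈ upperClosure A, joinCongGen (fun x y => y = u ∧ x ∈ A) x (x ⊔ u) := by
    intro x hx
    obtain ⟨a, ha, hax⟩ := mem_upperClosure.1 hx
    have := hgen.2 a u x (joinCongGen_of_rel ⟨rfl, ha⟩)
    rwa [sup_eq_right.2 hax, sup_comm] at this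
  constructor
  · refine fun h => h _ (isJoinCong_absorbRel u A) ?_
    rintro a _ ⟨rfl, ha⟩
    exact Or.inr ⟨subset_upperClosure ha, mem_upperClosure.2 ⟨a, ha, hA a ha⟩,
      by rw [sup_eq_right.2 (hA a ha), sup_idem]⟩
  · rintro (rfl | ⟨hx, hy, hxy⟩)
    · exact hgen.1.refl x
    · exact hgen.1.trans (to_sup x hx) (hxy ▸ hgen.1.symm (to_sup y hy))

end JoinCongGen

section Grid

variable {m n : ℕ}

lemma grid_eq_natCast_iff {p q : ℕ} (hp : p ≤ m) (hq : q ≤ n) (a : Grid m n) :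
    a = ((p : Fin (m + 1)), (q : Fin (n + 1))) ↔ a.1.val = p ∧ a.2.val = q := by
  rw [Prod.ext_iff, Fin.ext_iff, Fin.ext_iff, Fin.val_cast_of_lt (by omega),
    Fin.val_cast_of_lt (by omega)]

lemma grid_natCast_le_iff {p q : ℕ} (hp : p ≤ m) (hq : q ≤ n) (a : Grid m n) :
    ((p : Fin (m + 1)), (q : Fin (n + 1))) ≤ a ↔ p ≤ a.1.val ∧ q ≤ a.2.val := by
  rw [Prod.le_def, Fin.le_def, Fin.le_def, Fin.val_cast_of_lt (by omega),
    Fin.val_cast_of_lt (by omega)]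

lemma grid_sup_natCast_eq_iff {p q : ℕ} (hp : p ≤ m) (hq : q ≤ n) (a b : Grid m n) :
    a ⊔ ((p : Fin (m + 1)), (q : Fin (n + 1))) = b ⊔ ((p : Fin (m + 1)), (q : Fin (n + 1))) ↔
      max a.1.val p = max b.1.val p ∧ max a.2.val q = max b.2.val q := by
  rw [Prod.ext_iff, Fin.ext_iff, Fin.ext_iff]
  simp only [Prod.fst_sup, Prod.snd_sup, Fin.coe_max, Fin.val_cast_of_lt (Nat.lt_succ_of_le hp),
    Fin.val_cast_of_lt (Nat.lt_succ_of_le hq)]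

lemma grid_exists_column_pair_iff (k : ℕ) {q q' : ℕ} (hq : q ≤ n) (hq' : q' ≤ n) (a b : Grid m n) :
    (∃ s : ℕ, k < s ∧ s ≤ m ∧
      ({a, b} : Set (Grid m n)) = {((s : Fin (m + 1)), (q : Fin (n + 1))),
        ((s : Fin (m + 1)), (q' : Fin (n + 1)))}) ↔
    k < a.1.val ∧ b.1.val = a.1.val ∧
      ((a.2.val = q ∧ b.2.val = q') ∨ (a.2.val = q' ∧ b.2.val = q)) := by
  constructor
  · rintro ⟨s, hks, hsm, h⟩
    simp only [Set.pair_eq_pair_iff, grid_eq_natCast_iff hsm hq, grid_eq_natCast_iff hsm hq'] at h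
    omega
  · rintro ⟨hk, hb, h⟩
    have ha : a.1.val ≤ m := Nat.lt_succ_iff.1 a.1.isLt
    refine ⟨a.1.val, hk, ha, ?_⟩
    simp only [Set.pair_eq_pair_iff, grid_eq_natCast_iff ha hq, grid_eq_natCast_iff ha hq',
      true_and]
    omega

lemma grid_exists_row_pair_iff (k : ℕ) {p p' : ℕ} (hp : p ≤ m) (hp' : p' ≤ m) (a b : Grid m n) :
    (∃ t : ℕ, k < t ∧ t ≤ n ∧
      ({a, b} : Set (Grid m n)) = {((p : Fin (m + 1)), (t : Fin (n + 1))),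
        ((p' : Fin (m + 1)), (t : Fin (n + 1)))}) ↔
    k < a.2.val ∧ b.2.val = a.2.val ∧
      ((a.1.val = p ∧ b.1.val = p') ∨ (a.1.val = p' ∧ b.1.val = p)) := by
  constructor
  · rintro ⟨t, hkt, htn, h⟩
    simp only [Set.pair_eq_pair_iff, grid_eq_natCast_iff hp htn, grid_eq_natCast_iff hp' htn] at h
    omega
  · rintro ⟨hk, hb, h⟩
    have ha : a.2.val ≤ n := Nat.lt_succ_iff.1 a.2.isLt
    refine ⟨a.2.val, hk, ha, ?_⟩
    simp only [Set.pair_eq_pair_iff, grid_eq_natCast_iff hp ha, grid_eq_natCast_iff hp' ha,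
      and_true]
    omega

end Grid

section Corner

variable {m n i j : ℕ}

lemma cg_eq_absorbRel (him : i ≤ m) (hjn : j ≤ n) :
    cg m n i j = absorbRel ((i : Fin (m + 1)), (j : Fin (n + 1)))
      {((i : Fin (m + 1)), ((j - 1 : ℕ) : Fin (n + 1))),
        (((i - 1 : ℕ) : Fin (m + 1)), (j : Fin (n + 1)))} := by
  refine joinCongGen_eq_absorbRel ?_
  rintro a (rfl | rfl)
  · rw [grid_natCast_le_iff him (by omega), Fin.val_cast_of_lt (by omega),
      Fin.val_cast_of_lt (by omega)]
    omega
  · rw [grid_natCast_le_iff (by omega) hjn, Fin.val_cast_of_lt (by omega),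
      Fin.val_cast_of_lt (by omega)]
    omega

lemma mem_upperClosure_corner_iff (him : i ≤ m) (hjn : j ≤ n) (a : Grid m n) :
    a ∈ upperClosure ({((i : Fin (m + 1)), ((j - 1 : ℕ) : Fin (n + 1))),
        (((i - 1 : ℕ) : Fin (m + 1)), (j : Fin (n + 1)))} : Set (Grid m n)) ↔
      (i ≤ a.1.val ∧ j - 1 ≤ a.2.val) ∨ (i - 1 ≤ a.1.val ∧ j ≤ a.2.val) := by
  rw [mem_upperClosure, Set.exists_mem_insert]
  simp only [Set.mem_singleton_iff, exists_eq_left]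
  rw [grid_natCast_le_iff him (by omega), grid_natCast_le_iff (by omega) hjn]

lemma mem_corner_triple_iff (him : i ≤ m) (hjn : j ≤ n) (a : Grid m n) :
    a ∈ ({((i : Fin (m + 1)), ((j - 1 : ℕ) : Fin (n + 1))),
        (((i - 1 : ℕ) : Fin (m + 1)), (j : Fin (n + 1))),
        ((i : Fin (m + 1)), (j : Fin (n + 1)))} : Set (Grid m n)) ↔
      (a.1.val = i ∧ a.2.val = j - 1) ∨ (a.1.val = i - 1 ∧ a.2.val = j) ∨
        (a.1.val = i ∧ a.2.val = j) := by
  simp only [Set.mem_insert_iff, Set.mem_singleton_iff, grid_eq_natCast_iff him hjn,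
    grid_eq_natCast_iff him ((Nat.sub_le j 1).trans hjn),
    grid_eq_natCast_iff ((Nat.sub_le i 1).trans him) hjn]

lemma corner_coords_iff (hi : 1 ≤ i) (hj : 1 ≤ j) {x₁ x₂ y₁ y₂ : ℕ}
    (hne : ¬(x₁ = y₁ ∧ x₂ = y₂)) :
    (((i ≤ x₁ ∧ j - 1 ≤ x₂) ∨ (i - 1 ≤ x₁ ∧ j ≤ x₂)) ∧
      ((i ≤ y₁ ∧ j - 1 ≤ y₂) ∨ (i - 1 ≤ y₁ ∧ j ≤ y₂)) ∧
      max x₁ i = max y₁ i ∧ max x₂ j = max y₂ j) ↔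
    (((x₁ = i ∧ x₂ = j - 1) ∨ (x₁ = i - 1 ∧ x₂ = j) ∨ (x₁ = i ∧ x₂ = j)) ∧
        ((y₁ = i ∧ y₂ = j - 1) ∨ (y₁ = i - 1 ∧ y₂ = j) ∨ (y₁ = i ∧ y₂ = j))) ∨
      (i < x₁ ∧ y₁ = x₁ ∧ ((x₂ = j - 1 ∧ y₂ = j) ∨ (x₂ = j ∧ y₂ = j - 1))) ∨
      (j < x₂ ∧ y₂ = x₂ ∧ ((x₁ = i - 1 ∧ y₁ = i) ∨ (x₁ = i ∧ y₁ = i - 1))) := by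
  constructor
  · rintro ⟨hx, hy, h₁, h₂⟩
    rcases Nat.lt_or_ge i x₁ with h₁' | h₁'
    · right; left; omega
    rcases Nat.lt_or_ge j x₂ with h₂' | h₂'
    · right; right; omega
    · left; omega
  · rintro (h | h | h) <;> omega

theorem cg_iff_of_ne (hi1 : 1 ≤ i) (him : i ≤ m) (hj1 : 1 ≤ j) (hjn : j ≤ n) {a b : Grid m n}
    (hab : a ≠ b) :
    cg m n i j a b ↔
      (({a, b} : Set (Grid m n)) ⊆
          {((i : Fin (m + 1)), ((j - 1 : ℕ) : Fin (n + 1))),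
            (((i - 1 : ℕ) : Fin (m + 1)), (j : Fin (n + 1))),
            ((i : Fin (m + 1)), (j : Fin (n + 1)))} ∨
        (∃ s : ℕ, i < s ∧ s ≤ m ∧
          ({a, b} : Set (Grid m n)) =
            {((s : Fin (m + 1)), ((j - 1 : ℕ) : Fin (n + 1))),
              ((s : Fin (m + 1)), (j : Fin (n + 1)))}) ∨
        (∃ t : ℕ, j < t ∧ t ≤ n ∧
          ({a, b} : Set (Grid m n)) =
            {(((i - 1 : ℕ) : Fin (m + 1)), (t : Fin (n + 1))),
              ((i : Fin (m + 1)), (t : Fin (n + 1)))})) := by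
  have hne : ¬(a.1.val = b.1.val ∧ a.2.val = b.2.val) := fun h =>
    hab (Prod.ext (Fin.ext h.1) (Fin.ext h.2))
  rw [cg_eq_absorbRel him hjn, absorbRel, or_iff_right hab, mem_upperClosure_corner_iff him hjn,
    mem_upperClosure_corner_iff him hjn, grid_sup_natCast_eq_iff him hjn, Set.insert_subset_iff,
    Set.singleton_subset_iff, mem_corner_triple_iff him hjn, mem_corner_triple_iff him hjn,
    grid_exists_column_pair_iff i (by omega) hjn, grid_exists_row_pair_iff j (by omega) him]
  exact corner_coords_iff hi1 hj1 hne

lemma setOf_cg_corner (him : i ≤ m) (hjn : j ≤ n) :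
    {b : Grid m n | cg m n i j ((i : Fin (m + 1)), (j : Fin (n + 1))) b} =
      {((i : Fin (m + 1)), ((j - 1 : ℕ) : Fin (n + 1))),
        (((i - 1 : ℕ) : Fin (m + 1)), (j : Fin (n + 1))),
        ((i : Fin (m + 1)), (j : Fin (n + 1)))} := by
  ext b
  rw [Set.mem_ofPred_eq, cg_eq_absorbRel him hjn, absorbRel, mem_upperClosure_corner_iff him hjn,
    mem_upperClosure_corner_iff him hjn, grid_sup_natCast_eq_iff him hjn, eq_comm,
    grid_eq_natCast_iff him hjn, mem_corner_triple_iff him hjn,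
    Fin.val_cast_of_lt (by omega), Fin.val_cast_of_lt (by omega)]
  omega

end Corner

theorem cg_description_general (m n i j : ℕ)
    (hi1 : 1 ≤ i) (him : i ≤ m) (hj1 : 1 ≤ j) (hjn : j ≤ n) :
    (∀ a b : Grid m n, a ≠ b →
      (cg m n i j a b ↔
        (({a, b} : Set (Grid m n)) ⊆
            {((i : Fin (m + 1)), ((j - 1 : ℕ) : Fin (n + 1))),
              (((i - 1 : ℕ) : Fin (m + 1)), (j : Fin (n + 1))),
              ((i : Fin (m + 1)), (j : Fin (n + 1)))} ∨
          (∃ s : ℕ, i < s ∧ s ≤ m ∧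
            ({a, b} : Set (Grid m n)) =
              {((s : Fin (m + 1)), ((j - 1 : ℕ) : Fin (n + 1))),
                ((s : Fin (m + 1)), (j : Fin (n + 1)))}) ∨
          (∃ t : ℕ, j < t ∧ t ≤ n ∧
            ({a, b} : Set (Grid m n)) =
              {(((i - 1 : ℕ) : Fin (m + 1)), (t : Fin (n + 1))),
                ((i : Fin (m + 1)), (t : Fin (n + 1)))})))) ∧
    {b : Grid m n | cg m n i j ((i : Fin (m + 1)), (j : Fin (n + 1))) b} =
      {((i : Fin (m + 1)), ((j - 1 : ℕ) : Fin (n + 1))),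
        (((i - 1 : ℕ) : Fin (m + 1)), (j : Fin (n + 1))),
        ((i : Fin (m + 1)), (j : Fin (n + 1)))} :=
  ⟨fun _ _ hab => cg_iff_of_ne hi1 him hj1 hjn hab, setOf_cg_corner him hjn⟩

/-- Description of the join-congruence `α = cg(i,j)` of the grid `K_{m,n}`
(for `1 ≤ i ≤ m`, `1 ≤ j ≤ n`): for distinct `a, b`, `(a,b) ∈ α` iff
(1) both lie in `{(i,j−1),(i−1,j),(i,j)}`, or
(2) `{a,b} = {(s,j−1),(s,j)}` for some `i < s ≤ m`, or
(3) `{a,b} = {(i−1,t),(i,t)}` for some `j < t ≤ n`.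
In particular, the `α`-class of `(i,j)` is `{(i,j−1),(i−1,j),(i,j)}`. -/
theorem cg_description (m n i j : ℕ) (hm : 1 ≤ m) (hn : 1 ≤ n)
    (hi1 : 1 ≤ i) (him : i ≤ m) (hj1 : 1 ≤ j) (hjn : j ≤ n) :
    (∀ a b : Grid m n, a ≠ b →
      (cg m n i j a b ↔
        (({a, b} : Set (Grid m n)) ⊆
            {((i : Fin (m + 1)), ((j - 1 : ℕ) : Fin (n + 1))),
              (((i - 1 : ℕ) : Fin (m + 1)), (j : Fin (n + 1))),
              ((i : Fin (m + 1)), (j : Fin (n + 1)))} ∨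
          (∃ s : ℕ, i < s ∧ s ≤ m ∧
            ({a, b} : Set (Grid m n)) =
              {((s : Fin (m + 1)), ((j - 1 : ℕ) : Fin (n + 1))),
                ((s : Fin (m + 1)), (j : Fin (n + 1)))}) ∨
          (∃ t : ℕ, j < t ∧ t ≤ n ∧
            ({a, b} : Set (Grid m n)) =
              {(((i - 1 : ℕ) : Fin (m + 1)), (t : Fin (n + 1))),
                ((i : Fin (m + 1)), (t : Fin (n + 1)))})))) ∧
    {b : Grid m n | cg m n i j ((i : Fin (m + 1)), (j : Fin (n + 1))) b} =
      {((i : Fin (m + 1)), ((j - 1 : ℕ) : Fin (n + 1))),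
        (((i - 1 : ℕ) : Fin (m + 1)), (j : Fin (n + 1))),
        ((i : Fin (m + 1)), (j : Fin (n + 1)))} :=
  cg_description_general m n i j hi1 him hj1 hjn
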